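/- Let P1 := (x1^3 − x2^3)·(x2^3 − x3^3)·(x3^3 − x1^3) and P2 := x1^3·x2^3·x3^3 in ℂ[x1, x2, x3]. Then for all t0, t1 ∈ ℂ with t1 ≠ 0, the polynomial t1·x1^21 − (t0 − t1)·(x2^3 − x3^3)·P2·(P1 − P2) + t1·(x2^21 − x3^21) is irreducible in ℂ[x1, x2, x3]. -/

import Mathlib

/-!
Regard the polynomial as a polynomial in `x1` over `ℂ[x2, x3]`; it is `t1·x1²¹ + q` with
`deg q ≤ 9`. Every coefficient of `q` is a multiple of `x2³ − x3³` or of `x2²¹ − x3²¹`, hence lies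
in the prime ideal `(x2 − x3)`, while the constant coefficient `t1·(x2²¹ − x3²¹)` is not divisible
by `(x2 − x3)²`, because `(x2²¹ − x3²¹)/(x2 − x3)` takes the value `21` at `x2 = x3 = 1`. Since the
leading coefficient `t1` is a unit, Eisenstein's criterion applies.
-/

open MvPolynomial

/-- `P1 = (x1³−x2³)(x2³−x3³)(x3³−x1³)` in `ℂ[x1, x2, x3]`
(variables `x1 = X 0`, `x2 = X 1`, `x3 = X 2`). -/
noncomputable def P1 : MvPolynomial (Fin 3) ℂ :=
  (X 0 ^ 3 - X 1 ^ 3) * (X 1 ^ 3 - X 2 ^ 3) * (X 2 ^ 3 - X 0 ^ 3)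

/-- `P2 = x1³x2³x3³` in `ℂ[x1, x2, x3]`. -/
noncomputable def P2 : MvPolynomial (Fin 3) ℂ :=
  X 0 ^ 3 * X 1 ^ 3 * X 2 ^ 3

namespace Polynomial

theorem irreducible_C_mul_X_pow_add {R : Type*} [CommRing R] [IsDomain R]
    {P : Ideal R} (hP : P.IsPrime) {a : R} (ha : IsUnit a) {n : ℕ} (hn : 0 < n) {q : R[X]}
    (hqd : q.degree < n) (hqP : q ∈ P.map C) (hq0 : q.coeff 0 ∉ P ^ 2) :
    Irreducible (C a * X ^ n + q) := by
  have hdeg : q.degree < (C a * X ^ n).degree := by rwa [degree_C_mul_X_pow n ha.ne_zero]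
  have hnat : (C a * X ^ n + q).natDegree = n := by
    rw [natDegree_add_eq_left_of_degree_lt hdeg, natDegree_C_mul_X_pow n a ha.ne_zero]
  have hcoeff : ∀ k < n, (C a * X ^ n + q).coeff k = q.coeff k := fun k hk => by
    simp [hk.ne]
  have hlead : (C a * X ^ n + q).leadingCoeff = a := by
    rw [add_comm, leadingCoeff_add_of_degree_lt hdeg, leadingCoeff_C_mul_X_pow]
  refine IsEisensteinAt.irreducible ⟨?leading, ?mem, ?notMem⟩ hP ?primitive (by rwa [hnat])
  case leading =>
    rw [hlead]
    exact fun h => hP.ne_top (Ideal.eq_top_of_isUnit_mem _ h ha)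
  case mem =>
    intro k hk
    rw [hnat] at hk
    rw [hcoeff k hk]
    exact Ideal.mem_map_C_iff.mp hqP k
  case notMem => rwa [hcoeff 0 hn]
  case primitive =>
    refine isPrimitive_iff_isUnit_of_C_dvd.mpr fun r hr => isUnit_of_dvd_unit ?_ ha
    rw [← hlead]
    exact (C_dvd_iff_dvd_coeff r _).mp hr _

end Polynomial

namespace MvPolynomial

section CommSemiring

variable {R : Type*} [CommSemiring R]

theorem finSuccEquiv_C {n : ℕ} (a : R) : finSuccEquiv R n (C a) = Polynomial.C (C a) := by
  simp [finSuccEquiv_apply]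

theorem finSuccEquiv_X_one {n : ℕ} : finSuccEquiv R (n + 1) (X 1) = Polynomial.C (X 0) := by
  rw [← Fin.succ_zero_eq_one, finSuccEquiv_X_succ]

theorem finSuccEquiv_X_two {n : ℕ} : finSuccEquiv R (n + 2) (X 2) = Polynomial.C (X 1) := by
  rw [← Fin.succ_one_eq_two, finSuccEquiv_X_succ]

end CommSemiring

theorem finSuccEquiv_X_one_pow_sub_X_two_pow {R : Type*} [CommRing R] (k : ℕ) :
    finSuccEquiv R 2 (X 1 ^ k - X 2 ^ k) = Polynomial.C (X 0 ^ k - X 1 ^ k) := by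
  simp [finSuccEquiv_X_one, finSuccEquiv_X_two]

section Domain

variable {R : Type*} [CommRing R] [IsDomain R]

theorem prime_X_zero_sub_X_one : Prime (X 0 - X 1 : MvPolynomial (Fin 2) R) := by
  rw [← MulEquiv.prime_iff (finSuccEquiv R 1).toMulEquiv]
  change Prime (finSuccEquiv R 1 (X 0 - X 1))
  rw [map_sub, finSuccEquiv_X_zero, finSuccEquiv_X_one]
  exact Polynomial.prime_X_sub_C _

theorem not_sq_dvd_X_zero_pow_sub_X_one_pow {n : ℕ} (hn : (n : R) ≠ 0) :
    ¬ (X 0 - X 1) ^ 2 ∣ (X 0 ^ n - X 1 ^ n : MvPolynomial (Fin 2) R) := by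
  rintro ⟨r, hr⟩
  have hgeom : ∑ i ∈ Finset.range n, (X 0) ^ i * (X 1) ^ (n - 1 - i) =
      (X 0 - X 1 : MvPolynomial (Fin 2) R) * r := by
    apply mul_right_cancel₀ prime_X_zero_sub_X_one.ne_zero
    rw [geom_sum₂_mul, hr]
    ring
  have := congrArg (eval fun _ => (1 : R)) hgeom
  simp only [map_sum, map_mul, map_pow, map_sub, eval_X, one_pow, mul_one, sub_self,
    zero_mul, Finset.sum_const, Finset.card_range, nsmul_eq_mul] at this
  exact hn this

end Domain

end MvPolynomial

noncomputable def lowerTerms (t0 t1 : ℂ) : MvPolynomial (Fin 3) ℂ :=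
  (X 1 ^ 3 - X 2 ^ 3) * (-C (t0 - t1) * P2 * (P1 - P2)) + C t1 * (X 1 ^ 21 - X 2 ^ 21)

theorem finSuccEquiv_lowerTerms_mem (t0 t1 : ℂ) :
    finSuccEquiv ℂ 2 (lowerTerms t0 t1) ∈ (Ideal.span {X 0 - X 1}).map Polynomial.C := by
  have hmem (k : ℕ) :
      finSuccEquiv ℂ 2 (X 1 ^ k - X 2 ^ k) ∈ (Ideal.span {X 0 - X 1}).map Polynomial.C := by
    rw [finSuccEquiv_X_one_pow_sub_X_two_pow]
    exact Ideal.mem_map_of_mem _ (Ideal.mem_span_singleton.mpr (sub_dvd_pow_sub_pow _ _ k))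
  rw [lowerTerms, map_add, map_mul, map_mul (finSuccEquiv ℂ 2) (C t1)]
  exact add_mem (Ideal.mul_mem_right _ _ (hmem 3)) (Ideal.mul_mem_left _ _ (hmem 21))

theorem degree_finSuccEquiv_lowerTerms_le (t0 t1 : ℂ) :
    (finSuccEquiv ℂ 2 (lowerTerms t0 t1)).degree ≤ 9 := by
  simp only [lowerTerms, P1, P2, map_add, map_mul, map_sub, map_neg, map_pow,
    finSuccEquiv_X_zero, finSuccEquiv_X_one, finSuccEquiv_X_two, finSuccEquiv_C]
  compute_degree

theorem coeff_zero_finSuccEquiv_lowerTerms (t0 t1 : ℂ) :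
    (finSuccEquiv ℂ 2 (lowerTerms t0 t1)).coeff 0 = C t1 * (X 0 ^ 21 - X 1 ^ 21) := by
  simp [lowerTerms, P2, finSuccEquiv_X_one_pow_sub_X_two_pow, finSuccEquiv_C,
    finSuccEquiv_X_zero, Polynomial.coeff_zero_eq_eval_zero]

/-- For all `t0, t1 ∈ ℂ` with `t1 ≠ 0`, the degree-21 polynomial
`t1·x1²¹ − (t0−t1)·(x2³−x3³)·P2·(P1−P2) + t1·(x2²¹ − x3²¹)` is irreducible in
`ℂ[x1, x2, x3]`. -/
theorem stmt_16 (t0 t1 : ℂ) (ht1 : t1 ≠ 0) :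
    Irreducible (C t1 * X 0 ^ 21 -
      C (t0 - t1) * ((X 1 ^ 3 - X 2 ^ 3) * P2 * (P1 - P2)) +
      C t1 * (X 1 ^ 21 - X 2 ^ 21)) := by
  have hsplit : finSuccEquiv ℂ 2 (C t1 * X 0 ^ 21 -
      C (t0 - t1) * ((X 1 ^ 3 - X 2 ^ 3) * P2 * (P1 - P2)) + C t1 * (X 1 ^ 21 - X 2 ^ 21)) =
      Polynomial.C (C t1) * Polynomial.X ^ 21 + finSuccEquiv ℂ 2 (lowerTerms t0 t1) := by
    rw [← finSuccEquiv_X_zero, ← finSuccEquiv_C, ← map_pow, ← map_mul, ← map_add, lowerTerms]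
    congr 1
    ring
  have hprime : Prime (X 0 - X 1 : MvPolynomial (Fin 2) ℂ) := prime_X_zero_sub_X_one
  have hunit : IsUnit (C t1 : MvPolynomial (Fin 2) ℂ) := (isUnit_iff_ne_zero.mpr ht1).map C
  refine Irreducible.of_map (f := finSuccEquiv ℂ 2) ?_
  rw [hsplit]
  refine Polynomial.irreducible_C_mul_X_pow_add ((Ideal.span_singleton_prime hprime.ne_zero).mpr
    hprime) hunit (by norm_num) ((degree_finSuccEquiv_lowerTerms_le t0 t1).trans_lt (by norm_num))
    (finSuccEquiv_lowerTerms_mem t0 t1) ?_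
  rw [coeff_zero_finSuccEquiv_lowerTerms, Ideal.span_singleton_pow, Ideal.mem_span_singleton,
    hunit.dvd_mul_left]
  exact not_sq_dvd_X_zero_pow_sub_X_one_pow (by norm_num)
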